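/- In the root system of type C_n (n ≥ 2) with simple roots α_1, ..., α_{n-1} (short) and β = α_n (long), suppose γ_1 ≠ γ_2 are positive roots with (1/2)·ht(γ_2) < ht(γ_1) ≤ ht(γ_2) and ⟨γ_2, γ_1^∨⟩ = 2. Then there exist integers 1 ≤ i < j ≤ n such that γ_2 = 2α_i + 2α_{i+1} + ... + 2α_{n-1} + β and γ_1 = α_i + ... + α_{j-1} + 2α_j + ... + 2α_{n-1} + β. -/

import Mathlib

namespace CnRoots

/-- The standard basis vector `e_i` of `ℚ^n` (`1`-indexed: `1 ≤ i ≤ n`). -/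
def e (n i : ℕ) : Fin n → ℚ := fun j => if (j : ℕ) + 1 = i then 1 else 0

/-- The standard inner product on `ℚ^n`. -/
def inn {n : ℕ} (x y : Fin n → ℚ) : ℚ := ∑ j, x j * y j

/-- The pairing `⟨x, y^∨⟩ = 2(x,y)/(y,y)` of a vector with the coroot of `y`. -/
def pairing {n : ℕ} (x y : Fin n → ℚ) : ℚ := 2 * inn x y / inn y y

/-- Height of a root of `C_n` (sum of its coefficients in the basis of simple roots
`α_i = e_i − e_{i+1}` (`1 ≤ i ≤ n−1`) and `β = 2e_n`); on roots it is computed by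
pairing with `ρ^∨`, i.e. `ht(γ) = Σ_j γ_j·(n − j + 1/2)` (`1`-indexed `j`). -/
def ht {n : ℕ} (x : Fin n → ℚ) : ℚ := ∑ j, x j * ((n : ℚ) - (j : ℚ) - 1 / 2)

/-- Positive roots of `C_n`: `e_i − e_j` and `e_i + e_j` for `1 ≤ i < j ≤ n`, and
`2e_i` for `1 ≤ i ≤ n`. -/
def IsPosRoot (n : ℕ) (γ : Fin n → ℚ) : Prop :=
  (∃ i j : ℕ, 1 ≤ i ∧ i < j ∧ j ≤ n ∧ γ = e n i - e n j) ∨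
  (∃ i j : ℕ, 1 ≤ i ∧ i < j ∧ j ≤ n ∧ γ = e n i + e n j) ∨
  (∃ i : ℕ, 1 ≤ i ∧ i ≤ n ∧ γ = (2 : ℚ) • e n i)

/-!
The condition `⟨γ₂, γ₁^∨⟩ = 2` says `(γ₂, γ₁) = (γ₁, γ₁)`, so `γ₂ - γ₁ ⟂ γ₁` and
`|γ₂|² = |γ₁|² + |γ₂ - γ₁|² > |γ₁|²`. Since roots of `C_n` have squared length `2` or `4`,
`γ₁ = e_a ± e_b` is short and `γ₂ = 2e_c` is long, and `(2e_c, γ₁) = 2` forces `γ₁` to have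
coefficient `1` at `c`. Of the remaining pairs, `(e_a - e_b, 2e_a)` violates
`ht γ₂ / 2 < ht γ₁` and `(e_a + e_b, 2e_b)` violates `ht γ₁ ≤ ht γ₂`; what is left is
`(e_a + e_b, 2e_a)`.
-/

theorem _root_.dotProduct_self_lt_of_dotProduct_eq {R ι : Type*} [CommRing R] [LinearOrder R]
    [IsStrictOrderedRing R] [Fintype ι] {x y : ι → R} (h : x ⬝ᵥ y = y ⬝ᵥ y) (hne : x ≠ y) :
    y ⬝ᵥ y < x ⬝ᵥ x := by
  have hdecomp : x ⬝ᵥ x = y ⬝ᵥ y + (x - y) ⬝ᵥ (x - y) := by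
    simp only [sub_dotProduct, dotProduct_sub, dotProduct_comm y x, h]
    ring
  have hpos : 0 < (x - y) ⬝ᵥ (x - y) :=
    lt_of_le_of_ne (Finset.sum_nonneg fun i _ => mul_self_nonneg _)
      (Ne.symm (dotProduct_self_eq_zero.not.mpr (sub_ne_zero.mpr hne)))
  linarith

variable {n : ℕ}

theorem inn_eq_dotProduct (x y : Fin n → ℚ) : inn x y = x ⬝ᵥ y := rfl

def rhoCheck (n : ℕ) : Fin n → ℚ := fun j => (n : ℚ) - j - 1 / 2

theorem ht_eq_dotProduct (x : Fin n → ℚ) : ht x = x ⬝ᵥ rhoCheck n := rfl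

theorem dotProduct_eq_dotProduct_self_of_pairing_eq_two {x y : Fin n → ℚ}
    (h : pairing x y = 2) : x ⬝ᵥ y = y ⬝ᵥ y := by
  rw [pairing, inn_eq_dotProduct, inn_eq_dotProduct] at h
  -- division by `0` would make the pairing `0`
  have hy : y ⬝ᵥ y ≠ 0 := by
    intro h0
    simp [h0] at h
  field_simp at h
  linarith

theorem e_eq_single {i : ℕ} (hi : 1 ≤ i) (hin : i ≤ n) :
    e n i = Pi.single ⟨i - 1, by omega⟩ 1 := by
  ext j
  simp only [e, Pi.single_apply, Fin.ext_iff]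
  grind

theorem e_dotProduct {i : ℕ} (hi : 1 ≤ i) (hin : i ≤ n) (x : Fin n → ℚ) :
    e n i ⬝ᵥ x = x ⟨i - 1, by omega⟩ := by
  rw [e_eq_single hi hin, single_dotProduct, one_mul]

theorem e_dotProduct_e {i : ℕ} (hi : 1 ≤ i) (hin : i ≤ n) (j : ℕ) :
    e n i ⬝ᵥ e n j = if i = j then 1 else 0 := by
  rw [e_dotProduct hi hin]
  simp only [e]
  grind

theorem ht_add (x y : Fin n → ℚ) : ht (x + y) = ht x + ht y := add_dotProduct x y _

theorem ht_sub (x y : Fin n → ℚ) : ht (x - y) = ht x - ht y := sub_dotProduct x y _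

theorem ht_smul (c : ℚ) (x : Fin n → ℚ) : ht (c • x) = c * ht x := smul_dotProduct c x _

theorem ht_e {i : ℕ} (hi : 1 ≤ i) (hin : i ≤ n) : ht (e n i) = n - i + 1 / 2 := by
  rw [ht_eq_dotProduct, e_dotProduct hi hin, rhoCheck, Nat.cast_sub hi]
  ring

theorem ht_e_sub_e {a b : ℕ} (ha : 1 ≤ a) (hab : a < b) (hbn : b ≤ n) :
    ht (e n a - e n b) = b - a := by
  rw [ht_sub, ht_e ha (by omega), ht_e (by omega) hbn]
  ring

theorem ht_e_add_e {a b : ℕ} (ha : 1 ≤ a) (hab : a < b) (hbn : b ≤ n) :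
    ht (e n a + e n b) = 2 * n - a - b + 1 := by
  rw [ht_add, ht_e ha (by omega), ht_e (by omega) hbn]
  ring

theorem ht_two_smul_e {i : ℕ} (hi : 1 ≤ i) (hin : i ≤ n) :
    ht ((2 : ℚ) • e n i) = 2 * n - 2 * i + 1 := by
  rw [ht_smul, ht_e hi hin]
  ring

theorem dotProduct_self_e_sub_e {a b : ℕ} (ha : 1 ≤ a) (hab : a < b) (hbn : b ≤ n) :
    (e n a - e n b) ⬝ᵥ (e n a - e n b) = 2 := by
  simp only [sub_dotProduct, dotProduct_sub, e_dotProduct_e, *, (by omega : 1 ≤ b),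
    (by omega : a ≤ n), hab.ne, hab.ne']
  norm_num

theorem dotProduct_self_e_add_e {a b : ℕ} (ha : 1 ≤ a) (hab : a < b) (hbn : b ≤ n) :
    (e n a + e n b) ⬝ᵥ (e n a + e n b) = 2 := by
  simp only [add_dotProduct, dotProduct_add, e_dotProduct_e, *, (by omega : 1 ≤ b),
    (by omega : a ≤ n), hab.ne, hab.ne']
  norm_num

theorem dotProduct_self_two_smul_e {i : ℕ} (hi : 1 ≤ i) (hin : i ≤ n) :
    ((2 : ℚ) • e n i) ⬝ᵥ ((2 : ℚ) • e n i) = 4 := by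
  simp only [smul_dotProduct, dotProduct_smul, e_dotProduct_e hi hin i]
  norm_num

theorem eq_of_two_smul_e_dotProduct_e_sub_e {a b c : ℕ} (hc : 1 ≤ c) (hcn : c ≤ n)
    (h : ((2 : ℚ) • e n c) ⬝ᵥ (e n a - e n b) = 2) : c = a := by
  simp only [smul_dotProduct, dotProduct_sub, e_dotProduct_e hc hcn] at h
  split_ifs at h with hca <;> norm_num at h
  exact hca

theorem eq_or_eq_of_two_smul_e_dotProduct_e_add_e {a b c : ℕ} (hc : 1 ≤ c) (hcn : c ≤ n)
    (h : ((2 : ℚ) • e n c) ⬝ᵥ (e n a + e n b) = 2) : c = a ∨ c = b := by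
  simp only [smul_dotProduct, dotProduct_add, e_dotProduct_e hc hcn] at h
  split_ifs at h <;> norm_num at h <;> tauto

theorem IsPosRoot.dotProduct_self_eq {γ : Fin n → ℚ} (h : IsPosRoot n γ) :
    γ ⬝ᵥ γ = 2 ∨ γ ⬝ᵥ γ = 4 := by
  rcases h with ⟨a, b, ha, hab, hbn, rfl⟩ | ⟨a, b, ha, hab, hbn, rfl⟩ | ⟨c, hc, hcn, rfl⟩
  · exact .inl (dotProduct_self_e_sub_e ha hab hbn)
  · exact .inl (dotProduct_self_e_add_e ha hab hbn)
  · exact .inr (dotProduct_self_two_smul_e hc hcn)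

theorem IsPosRoot.short_long {γ₁ γ₂ : Fin n → ℚ} (h₁ : IsPosRoot n γ₁) (h₂ : IsPosRoot n γ₂)
    (hlt : γ₁ ⬝ᵥ γ₁ < γ₂ ⬝ᵥ γ₂) :
    (∃ a b : ℕ, 1 ≤ a ∧ a < b ∧ b ≤ n ∧ (γ₁ = e n a - e n b ∨ γ₁ = e n a + e n b)) ∧
      ∃ c : ℕ, 1 ≤ c ∧ c ≤ n ∧ γ₂ = (2 : ℚ) • e n c := by
  have hγ₁ := h₁.dotProduct_self_eq
  have hγ₂ := h₂.dotProduct_self_eq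
  constructor
  · rcases h₁ with ⟨a, b, ha, hab, hbn, rfl⟩ | ⟨a, b, ha, hab, hbn, rfl⟩ | ⟨c, hc, hcn, rfl⟩
    · exact ⟨a, b, ha, hab, hbn, .inl rfl⟩
    · exact ⟨a, b, ha, hab, hbn, .inr rfl⟩
    · rw [dotProduct_self_two_smul_e hc hcn] at hlt
      rcases hγ₂ with h | h <;> linarith
  · rcases h₂ with ⟨a, b, ha, hab, hbn, rfl⟩ | ⟨a, b, ha, hab, hbn, rfl⟩ | hlong
    · rw [dotProduct_self_e_sub_e ha hab hbn] at hlt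
      rcases hγ₁ with h | h <;> linarith
    · rw [dotProduct_self_e_add_e ha hab hbn] at hlt
      rcases hγ₁ with h | h <;> linarith
    · exact hlong

theorem bad_pair_classification_general (n : ℕ) (γ₁ γ₂ : Fin n → ℚ)
    (h₁ : IsPosRoot n γ₁) (h₂ : IsPosRoot n γ₂) (hne : γ₁ ≠ γ₂)
    (hlt : ht γ₂ / 2 < ht γ₁) (hle : ht γ₁ ≤ ht γ₂)
    (hpair : pairing γ₂ γ₁ = 2) :
    ∃ i j : ℕ, 1 ≤ i ∧ i < j ∧ j ≤ n ∧
      γ₂ = (2 : ℚ) • e n i ∧ γ₁ = e n i + e n j := by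
  have horth := dotProduct_eq_dotProduct_self_of_pairing_eq_two hpair
  obtain ⟨⟨a, b, ha, hab, hbn, hγ₁⟩, c, hc, hcn, rfl⟩ :=
    h₁.short_long h₂ (dotProduct_self_lt_of_dotProduct_eq horth hne.symm)
  have hb_cast : (b : ℚ) ≤ n := by exact_mod_cast hbn
  have hab_cast : (a : ℚ) < b := by exact_mod_cast hab
  rcases hγ₁ with rfl | rfl
  · rw [dotProduct_self_e_sub_e ha hab hbn] at horth
    obtain rfl := eq_of_two_smul_e_dotProduct_e_sub_e hc hcn horth
    rw [ht_two_smul_e hc hcn, ht_e_sub_e ha hab hbn] at hlt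
    linarith
  · rw [dotProduct_self_e_add_e ha hab hbn] at horth
    obtain rfl | rfl := eq_or_eq_of_two_smul_e_dotProduct_e_add_e hc hcn horth
    · exact ⟨c, b, ha, hab, hbn, rfl, rfl⟩
    · rw [ht_two_smul_e hc hcn, ht_e_add_e ha hab hbn] at hle
      linarith

/-- In the root system of type `C_n` (`n ≥ 2`), suppose `γ₁ ≠ γ₂` are
positive roots with `(1/2)·ht(γ₂) < ht(γ₁) ≤ ht(γ₂)` and `⟨γ₂, γ₁^∨⟩ = 2`.  Then there
exist `1 ≤ i < j ≤ n` with `γ₂ = 2α_i + ⋯ + 2α_{n−1} + β = 2e_i` and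
`γ₁ = α_i + ⋯ + α_{j−1} + 2α_j + ⋯ + 2α_{n−1} + β = e_i + e_j`. -/
theorem bad_pair_classification (n : ℕ) (hn : 2 ≤ n) (γ₁ γ₂ : Fin n → ℚ)
    (h₁ : IsPosRoot n γ₁) (h₂ : IsPosRoot n γ₂) (hne : γ₁ ≠ γ₂)
    (hlt : ht γ₂ / 2 < ht γ₁) (hle : ht γ₁ ≤ ht γ₂)
    (hpair : pairing γ₂ γ₁ = 2) :
    ∃ i j : ℕ, 1 ≤ i ∧ i < j ∧ j ≤ n ∧
      γ₂ = (2 : ℚ) • e n i ∧ γ₁ = e n i + e n j :=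
  bad_pair_classification_general n γ₁ γ₂ h₁ h₂ hne hlt hle hpair

end CnRoots
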